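/- arXiv:1508.03232 — 3 statements merged into one kernel-verified Lean document; each statement's English description precedes it below -/
import Mathlib

section
/- For every ℓ ∈ ℕ and every ζ ∈ ℂ, the surface integral over the unit sphere satisfies (2ℓ+1) ∫_{S²} (n₁ − i n₂)^ℓ · n(ζ)^ℓ dA(n) = 4π · 2^ℓ (ℓ!)² / (2ℓ)!. In particular the left-hand side is independent of ζ. -/
open MeasureTheory

/-- `x(ζ) = (1/2)(x₁ + i x₂) + ζ x₃ − (1/2)(x₁ − i x₂) ζ²` on Euclidean `ℝ³`. -/
noncomputable def xzE (ζ : ℂ) (x : EuclideanSpace ℝ (Fin 3)) : ℂ :=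
  (1 / 2 : ℂ) * ((x 0 : ℂ) + Complex.I * (x 1 : ℂ)) + ζ * (x 2 : ℂ)
    - (1 / 2 : ℂ) * ((x 0 : ℂ) - Complex.I * (x 1 : ℂ)) * ζ ^ 2

/-! `P(x) = (x₁ − i x₂)^ℓ x(ζ)^ℓ` is homogeneous of degree `2ℓ`, so in polar coordinates
`∫_{ℝ³} P(x) e^{-‖x‖²} dx = (∫_{S²} P dA) · ∫₀^∞ r^{2ℓ+2} e^{-r²} dr`, and the radial factor is
`Γ(ℓ + 3/2) / 2 = (2ℓ+1)‼ √π / 2^{ℓ+2}`.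
Computing the same Gaussian integral in the coordinates `t = x₃`, `w = x₁ + i x₂` gives
`∫ e^{-t²} dt` times `∫_ℂ w̄^ℓ (w/2 − ζ² w̄/2 + ζ t)^ℓ e^{-|w|²} dw`. Invariance under the rotations
`w ↦ u w` kills every moment `∫ w̄^a w^b e^{-|w|²}` with `a ≠ b`, so only the term `2^{-ℓ} |w|^{2ℓ}`
survives, whatever `ζ` and `t` are; the Gaussian integral is therefore `2^{-ℓ} π ℓ! √π`. -/

open Set Real ComplexConjugate
open scoped Nat

theorem integrableOn_Ioi_pow_mul_exp_neg_sq (n : ℕ) :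
    IntegrableOn (fun r : ℝ ↦ r ^ n * exp (-r ^ 2)) (Ioi 0) := by
  simpa [Real.rpow_natCast] using
    integrableOn_rpow_mul_exp_neg_mul_sq one_pos (s := n) (by linarith [n.cast_nonneg (α := ℝ)])

theorem integral_Ioi_pow_mul_exp_neg_sq (n : ℕ) :
    ∫ r in Ioi (0 : ℝ), r ^ n * exp (-r ^ 2) = Gamma ((n + 1) / 2) / 2 := by
  have := integral_rpow_mul_exp_neg_rpow two_pos (q := n) (by linarith [n.cast_nonneg (α := ℝ)])
  simp only [Real.rpow_natCast, Real.rpow_two] at this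
  rw [this]; ring

theorem integral_Ioi_pow_two_mul_add_two_mul_exp_neg_sq (n : ℕ) :
    ∫ r in Ioi (0 : ℝ), r ^ (2 * n + 2) * exp (-r ^ 2) = (2 * n + 1)‼ * √π / 2 ^ (n + 2) := by
  rw [integral_Ioi_pow_mul_exp_neg_sq, show ((2 * n + 2 : ℕ) + 1 : ℝ) / 2 = n + 1 + 1 / 2 by
    push_cast; ring, Gamma_nat_add_one_add_half, pow_succ]
  ring

theorem Nat.doubleFactorial_two_mul_add_one_mul (n : ℕ) :
    (2 * n + 1)‼ * (2 ^ n * n !) = (2 * n + 1) * (2 * n)! := by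
  rw [← Nat.doubleFactorial_two_mul, ← Nat.factorial_eq_mul_doubleFactorial, Nat.factorial_succ]

section Homogeneous

variable {E 𝕜 : Type*} [NormedAddCommGroup E] [NormedSpace ℝ E] [RCLike 𝕜]

def IsPosHomogeneous (k : ℕ) (f : E → 𝕜) : Prop :=
  ∀ r : ℝ, 0 < r → ∀ x, f (r • x) = (r : 𝕜) ^ k * f x

theorem IsPosHomogeneous.apply_eq_norm_pow_mul {k : ℕ} {f : E → 𝕜} (hf : IsPosHomogeneous k f)
    {x : E} (hx : x ≠ 0) : f x = (‖x‖ : 𝕜) ^ k * f (‖x‖⁻¹ • x) := by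
  rw [← hf _ (norm_pos_iff.2 hx), smul_inv_smul₀ (norm_ne_zero_iff.2 hx)]

variable [Nontrivial E] [FiniteDimensional ℝ E] [MeasurableSpace E] [BorelSpace E]
  (μ : Measure E) [μ.IsAddHaarMeasure] {k : ℕ} {f : E → 𝕜}

theorem IsPosHomogeneous.integrable_mul_exp_neg_norm_sq (hf : IsPosHomogeneous k f)
    (hcont : Continuous f) : Integrable (fun x ↦ f x * (exp (-‖x‖ ^ 2) : 𝕜)) μ := by
  obtain ⟨C, hC⟩ := (isCompact_sphere (0 : E) 1).exists_bound_of_continuousOn hcont.continuousOn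
  have hdom : Integrable (fun x : E ↦ C * (‖x‖ ^ k * exp (-‖x‖ ^ 2))) μ := by
    refine .const_mul ((integrable_fun_norm_addHaar μ (f := fun r ↦ r ^ k * exp (-r ^ 2))).2 ?_) _
    simpa only [smul_eq_mul, ← mul_assoc, ← pow_add] using
      integrableOn_Ioi_pow_mul_exp_neg_sq (Module.finrank ℝ E - 1 + k)
  refine hdom.mono' (by fun_prop) ?_
  filter_upwards [μ.ae_ne 0] with x hx
  have hθ : ‖x‖⁻¹ • x ∈ Metric.sphere (0 : E) 1 := by
    simp [norm_smul, norm_ne_zero_iff.2 hx]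
  rw [hf.apply_eq_norm_pow_mul hx, norm_mul, norm_mul, norm_pow, RCLike.norm_ofReal,
    RCLike.norm_ofReal, abs_norm, abs_of_pos (exp_pos _)]
  calc _ = ‖f (‖x‖⁻¹ • x)‖ * (‖x‖ ^ k * exp (-‖x‖ ^ 2)) := by ring
    _ ≤ C * (‖x‖ ^ k * exp (-‖x‖ ^ 2)) := by gcongr; exact hC _ hθ

theorem IsPosHomogeneous.integral_mul_comp_norm (hf : IsPosHomogeneous k f) (g : ℝ → 𝕜) :
    ∫ x, f x * g ‖x‖ ∂μ = (∫ θ, f θ ∂μ.toSphere) *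
      ∫ r in Ioi (0 : ℝ), (r : 𝕜) ^ (Module.finrank ℝ E - 1 + k) * g r := by
  calc ∫ x, f x * g ‖x‖ ∂μ
      = ∫ x : ({0}ᶜ : Set E), f x * g ‖(x : E)‖ ∂μ.comap (↑) := by
        rw [integral_subtype_comap (measurableSet_singleton _).compl fun x ↦ f x * g ‖x‖,
          restrict_compl_singleton]
    _ = ∫ p, f p.1 * ((p.2 : ℝ) ^ k * g p.2) ∂μ.toSphere.prod
          (.volumeIoiPow (Module.finrank ℝ E - 1)) := by
        rw [← μ.measurePreserving_homeomorphUnitSphereProd.integral_comp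
          (Homeomorph.measurableEmbedding _)]
        congr 1 with x
        simp only [homeomorphUnitSphereProd_apply_fst_coe, homeomorphUnitSphereProd_apply_snd_coe]
        rw [hf.apply_eq_norm_pow_mul x.2]
        ring
    _ = _ := by
        rw [integral_prod_mul (fun θ : Metric.sphere (0 : E) 1 ↦ f θ)
          fun r : Ioi (0 : ℝ) ↦ (r : 𝕜) ^ k * g r]
        congr 1
        simp only [Measure.volumeIoiPow, ENNReal.ofReal]
        rw [integral_withDensity_eq_integral_smul
          (measurable_subtype_coe.pow_const _).real_toNNReal,
          integral_subtype_comap measurableSet_Ioi fun r : ℝ ↦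
            Real.toNNReal (r ^ (Module.finrank ℝ E - 1)) • ((r : 𝕜) ^ k * g r)]
        refine setIntegral_congr_fun measurableSet_Ioi fun r hr ↦ ?_
        rw [NNReal.smul_def, Real.coe_toNNReal _ (pow_nonneg hr.out.le _),
          RCLike.real_smul_eq_coe_mul]
        push_cast
        ring

end Homogeneous

theorem isPosHomogeneous_conj_pow_mul_pow (a b : ℕ) :
    IsPosHomogeneous (a + b) fun w : ℂ ↦ conj w ^ a * w ^ b := by
  intro r _ w
  simp only [RCLike.ofReal_eq_complex_ofReal, Complex.real_smul, map_mul, Complex.conj_ofReal]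
  ring

theorem integrable_conj_pow_mul_pow_mul_exp_neg_norm_sq (a b : ℕ) :
    Integrable fun w : ℂ ↦ conj w ^ a * w ^ b * (exp (-‖w‖ ^ 2) : ℂ) :=
  (isPosHomogeneous_conj_pow_mul_pow a b).integrable_mul_exp_neg_norm_sq volume (by fun_prop)

theorem integral_conj_pow_mul_pow_mul_exp_neg_norm_sq_of_ne {a b : ℕ} (hab : a ≠ b) :
    ∫ w : ℂ, conj w ^ a * w ^ b * (exp (-‖w‖ ^ 2) : ℂ) = 0 := by
  set I := ∫ w : ℂ, conj w ^ a * w ^ b * (exp (-‖w‖ ^ 2) : ℂ)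
  set u : Circle := Circle.exp (π / ((b : ℝ) - a))
  have hu : conj (u : ℂ) ^ a * (u : ℂ) ^ b = -1 := by
    have hba : (b : ℂ) - a ≠ 0 := sub_ne_zero.2 (by exact_mod_cast hab.symm)
    rw [Circle.coe_exp, ← Complex.exp_conj, ← Complex.exp_nat_mul, ← Complex.exp_nat_mul,
      ← Complex.exp_add, ← Complex.exp_pi_mul_I]
    congr 1
    simp only [map_mul, Complex.conj_ofReal, Complex.conj_I]
    push_cast
    field_simp
    ring
  have hrot : I = conj (u : ℂ) ^ a * (u : ℂ) ^ b * I := calc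
    I = ∫ w : ℂ, conj (u * w) ^ a * (u * w) ^ b * (exp (-‖(u : ℂ) * w‖ ^ 2) : ℂ) :=
      ((rotation u).measurePreserving.integral_comp
        (rotation u).toHomeomorph.measurableEmbedding _).symm
    _ = ∫ w : ℂ, conj (u : ℂ) ^ a * (u : ℂ) ^ b *
          (conj w ^ a * w ^ b * (exp (-‖w‖ ^ 2) : ℂ)) := by
      simp only [map_mul, norm_mul, Circle.norm_coe, one_mul, mul_pow]
      congr 1 with w
      ring
    _ = _ := integral_const_mul _ _
  rw [hu] at hrot
  linear_combination hrot / 2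

theorem integral_norm_sq_pow_mul_exp_neg_norm_sq (a : ℕ) :
    ∫ w : ℂ, (‖w‖ ^ 2) ^ a * exp (-‖w‖ ^ 2) = π * a ! := by
  have hball : (volume : Measure ℂ).real (Metric.ball 0 1) = π := by simp [Measure.real]
  rw [integral_fun_norm_addHaar volume fun r ↦ (r ^ 2) ^ a * exp (-r ^ 2)]
  simp only [Complex.finrank_real_complex, hball, nsmul_eq_mul, smul_eq_mul, ← pow_mul,
    ← mul_assoc, ← pow_add, integral_Ioi_pow_mul_exp_neg_sq]
  rw [show ((2 - 1 + 2 * a : ℕ) + 1 : ℝ) / 2 = a + 1 by push_cast; ring, Gamma_nat_eq_factorial]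
  ring

theorem integral_conj_pow_mul_pow_mul_exp_neg_norm_sq (a b : ℕ) :
    ∫ w : ℂ, conj w ^ a * w ^ b * (exp (-‖w‖ ^ 2) : ℂ) = if a = b then (π : ℂ) * a ! else 0 := by
  split_ifs with hab
  · subst hab
    simp_rw [← mul_pow, Complex.conj_mul']
    have := congrArg ((↑) : ℝ → ℂ) (integral_norm_sq_pow_mul_exp_neg_norm_sq a)
    rw [← integral_complex_ofReal] at this
    simpa only [Complex.ofReal_mul, Complex.ofReal_pow, Complex.ofReal_natCast] using this
  · exact integral_conj_pow_mul_pow_mul_exp_neg_norm_sq_of_ne hab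

theorem integral_conj_pow_mul_linear_pow_mul_exp_neg_norm_sq (n : ℕ) (α β c : ℂ) :
    ∫ w : ℂ, conj w ^ n * (α * w + β * conj w + c) ^ n * (exp (-‖w‖ ^ 2) : ℂ) =
      α ^ n * (π * n !) := by
  set coeff : ℕ → ℕ → ℂ := fun m j ↦
    n.choose m * (n - m).choose j * α ^ m * β ^ j * c ^ (n - m - j)
  have hexpand : ∀ w : ℂ, conj w ^ n * (α * w + β * conj w + c) ^ n * (exp (-‖w‖ ^ 2) : ℂ) =
      ∑ m ∈ Finset.range (n + 1), ∑ j ∈ Finset.range (n - m + 1),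
        coeff m j * (conj w ^ (n + j) * w ^ m * (exp (-‖w‖ ^ 2) : ℂ)) := by
    intro w
    simp only [add_assoc, add_pow (α * w), add_pow (β * conj w), Finset.mul_sum, Finset.sum_mul]
    refine Finset.sum_congr rfl fun m _ ↦ Finset.sum_congr rfl fun j _ ↦ ?_
    simp only [coeff]
    ring
  simp_rw [hexpand]
  rw [integral_finsetSum _ fun m _ ↦ integrable_finsetSum _ fun j _ ↦
    (integrable_conj_pow_mul_pow_mul_exp_neg_norm_sq _ _).const_mul _]
  refine (Finset.sum_congr rfl fun m _ ↦ integral_finsetSum _ fun j _ ↦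
    (integrable_conj_pow_mul_pow_mul_exp_neg_norm_sq _ _).const_mul _).trans ?_
  simp only [integral_const_mul, integral_conj_pow_mul_pow_mul_exp_neg_norm_sq]
  rw [Finset.sum_eq_single n]
  · simp [coeff]
  · intro m hm hmn
    refine Finset.sum_eq_zero fun j _ ↦ ?_
    rw [if_neg (by grind), mul_zero]
  · simp

noncomputable def measurableEquivRealProdComplex : EuclideanSpace ℝ (Fin 3) ≃ᵐ ℝ × ℂ :=
  (MeasurableEquiv.toLp 2 (Fin 3 → ℝ)).symm.trans
    ((MeasurableEquiv.piFinSuccAbove (fun _ : Fin 3 ↦ ℝ) 2).trans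
      ((MeasurableEquiv.refl ℝ).prodCongr Complex.measurableEquivPi.symm))

theorem measurableEquivRealProdComplex_apply (x : EuclideanSpace ℝ (Fin 3)) :
    measurableEquivRealProdComplex x = (x 2, x 0 + x 1 * Complex.I) := rfl

theorem measurePreserving_measurableEquivRealProdComplex :
    MeasurePreserving measurableEquivRealProdComplex :=
  (MeasurePreserving.prod (.id volume) Complex.volume_preserving_equiv_pi.symm).comp
    ((volume_preserving_piFinSuccAbove (fun _ : Fin 3 ↦ ℝ) 2).comp
      (EuclideanSpace.volume_preserving_symm_measurableEquiv_toLp (Fin 3)))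

theorem isPosHomogeneous_conj_coord_pow_mul_xzE_pow (ℓ : ℕ) (ζ : ℂ) :
    IsPosHomogeneous (2 * ℓ) fun x : EuclideanSpace ℝ (Fin 3) ↦
      ((x 0 : ℂ) - Complex.I * x 1) ^ ℓ * xzE ζ x ^ ℓ := by
  intro r _ x
  have hcoord : ((r • x) 0 : ℂ) - Complex.I * (r • x) 1 = r * ((x 0 : ℂ) - Complex.I * x 1) := by
    simp only [PiLp.smul_apply, smul_eq_mul, Complex.ofReal_mul]
    ring
  have hxzE : xzE ζ (r • x) = r * xzE ζ x := by
    simp only [xzE, PiLp.smul_apply, smul_eq_mul, Complex.ofReal_mul]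
    ring
  simp only [RCLike.ofReal_eq_complex_ofReal]
  rw [hcoord, hxzE, mul_pow, mul_pow]
  ring

theorem integral_conj_coord_pow_mul_xzE_pow_mul_exp_neg_norm_sq (ℓ : ℕ) (ζ : ℂ) :
    ∫ x : EuclideanSpace ℝ (Fin 3),
        ((x 0 : ℂ) - Complex.I * x 1) ^ ℓ * xzE ζ x ^ ℓ * (exp (-‖x‖ ^ 2) : ℂ) =
      (1 / 2) ^ ℓ * (π * ℓ !) * √π := by
  set F : ℝ × ℂ → ℂ := fun p ↦ (exp (-p.1 ^ 2) : ℂ) *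
    (conj p.2 ^ ℓ * (1 / 2 * p.2 + -ζ ^ 2 / 2 * conj p.2 + ζ * p.1) ^ ℓ * (exp (-‖p.2‖ ^ 2) : ℂ))
  have hF : ∀ x : EuclideanSpace ℝ (Fin 3),
      ((x 0 : ℂ) - Complex.I * x 1) ^ ℓ * xzE ζ x ^ ℓ * (exp (-‖x‖ ^ 2) : ℂ) =
        F (measurableEquivRealProdComplex x) := by
    intro x
    have hnorm : ‖x‖ ^ 2 = x 2 ^ 2 + ‖(x 0 + x 1 * Complex.I : ℂ)‖ ^ 2 := by
      rw [EuclideanSpace.norm_sq_eq, Fin.sum_univ_three, Complex.sq_norm, Complex.normSq_add_mul_I]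
      simp only [Real.norm_eq_abs, sq_abs]
      ring
    simp only [F, measurableEquivRealProdComplex_apply, hnorm, xzE, neg_add, exp_add, map_add,
      map_mul, Complex.conj_ofReal, Complex.conj_I, Complex.ofReal_mul]
    ring
  have hint : Integrable F (volume.prod volume) := by
    rw [← Measure.volume_eq_prod,
      ← measurePreserving_measurableEquivRealProdComplex.integrable_comp_emb
        measurableEquivRealProdComplex.measurableEmbedding]
    simp only [Function.comp_def, ← hF]
    exact (isPosHomogeneous_conj_coord_pow_mul_xzE_pow ℓ ζ).integrable_mul_exp_neg_norm_sq volume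
      (by unfold xzE; fun_prop)
  simp only [hF]
  rw [measurePreserving_measurableEquivRealProdComplex.integral_comp
      measurableEquivRealProdComplex.measurableEmbedding, Measure.volume_eq_prod,
    integral_prod F hint]
  simp only [F, integral_const_mul, integral_conj_pow_mul_linear_pow_mul_exp_neg_norm_sq]
  rw [integral_mul_const, integral_complex_ofReal, show ∫ t : ℝ, exp (-t ^ 2) = √π by
    simpa using integral_gaussian 1]
  ring

/-- For every `ℓ ∈ ℕ` and every `ζ ∈ ℂ`,
`(2ℓ+1) ∫_{S²} (n₁ − i n₂)^ℓ n(ζ)^ℓ dA(n) = 4π · 2^ℓ (ℓ!)² / (2ℓ)!`;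
in particular the left-hand side is independent of `ζ`. -/
theorem sphere_integral_conj_coordinate_pow_mul_xz_pow (ℓ : ℕ) (ζ : ℂ) :
    (2 * ℓ + 1 : ℂ) *
        ∫ n : Metric.sphere (0 : EuclideanSpace ℝ (Fin 3)) 1,
          (((n : EuclideanSpace ℝ (Fin 3)) 0 : ℂ)
              - Complex.I * ((n : EuclideanSpace ℝ (Fin 3)) 1 : ℂ)) ^ ℓ *
            xzE ζ (n : EuclideanSpace ℝ (Fin 3)) ^ ℓ
          ∂((volume : Measure (EuclideanSpace ℝ (Fin 3))).toSphere) =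
      4 * (Real.pi : ℂ) * 2 ^ ℓ * (Nat.factorial ℓ : ℂ) ^ 2 / (Nat.factorial (2 * ℓ) : ℂ) := by
  have hpolar := (isPosHomogeneous_conj_coord_pow_mul_xzE_pow ℓ ζ).integral_mul_comp_norm volume
    fun r ↦ (exp (-r ^ 2) : ℂ)
  rw [integral_conj_coord_pow_mul_xzE_pow_mul_exp_neg_norm_sq, finrank_euclideanSpace_fin] at hpolar
  have hradial : ∫ r in Ioi (0 : ℝ), (r : ℂ) ^ (3 - 1 + 2 * ℓ) * (exp (-r ^ 2) : ℂ) =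
      ((2 * ℓ + 1)‼ * √π / 2 ^ (ℓ + 2) : ℝ) := by
    rw [← integral_Ioi_pow_two_mul_add_two_mul_exp_neg_sq, ← integral_complex_ofReal,
      show 3 - 1 + 2 * ℓ = 2 * ℓ + 2 by omega]
    simp only [Complex.ofReal_mul, Complex.ofReal_pow]
  have hdouble : ((2 * ℓ + 1)‼ : ℂ) * (2 ^ ℓ * ℓ !) = (2 * ℓ + 1) * (2 * ℓ)! := by
    exact_mod_cast Nat.doubleFactorial_two_mul_add_one_mul ℓ
  simp only [RCLike.ofReal_eq_complex_ofReal, hradial] at hpolar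
  rw [eq_div_iff (by exact_mod_cast (2 * ℓ).factorial_ne_zero), mul_right_comm, ← hdouble]
  have hhalf : (1 / 2 : ℂ) ^ ℓ * 2 ^ ℓ = 1 := by rw [← mul_pow]; norm_num
  push_cast at hpolar
  field_simp at hpolar
  linear_combination (-(2 ^ ℓ * ℓ ! : ℂ)) * hpolar + (4 * π * 2 ^ ℓ * ℓ ! ^ 2 : ℂ) * hhalf
end

section
/- Let ℓ ∈ ℕ, let f : ℝ³ → ℂ be smooth, and define for each ζ ∈ ℂ the integrals I(f)(ζ) = ∫_{S²} f(n) n(ζ)^ℓ dA(n), which are polynomials of degree at most 2ℓ in ζ. Then with L₊ = (n₁ + i n₂) ∂/∂n₃ − n₃(∂/∂n₁ + i ∂/∂n₂), L₋ = (n₁ − i n₂) ∂/∂n₃ − n₃(∂/∂n₁ − i ∂/∂n₂), L₀ = n₁ ∂/∂n₂ − n₂ ∂/∂n₁ acting on functions, and J₊ p = ζ² p' − 2ℓ ζ p, J₋ p = p', J₀ p = i(ζ p' − ℓ p) acting on polynomials, one has J_μ (I(f)) = I(L_μ f) for each μ ∈ {+, −, 0}. -/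
set_option maxHeartbeats 1000000

open MeasureTheory

/-- Partial derivative `∂f/∂n_j` of a complex-valued function on Euclidean `ℝ³`. -/
noncomputable def pdE (j : Fin 3) (f : EuclideanSpace ℝ (Fin 3) → ℂ)
    (x : EuclideanSpace ℝ (Fin 3)) : ℂ :=
  fderiv ℝ f x (EuclideanSpace.single j 1)

/-- `L₊ = (n₁ + i n₂) ∂/∂n₃ − n₃(∂/∂n₁ + i ∂/∂n₂)`. -/
noncomputable def LpE (f : EuclideanSpace ℝ (Fin 3) → ℂ) (x : EuclideanSpace ℝ (Fin 3)) : ℂ :=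
  ((x 0 : ℂ) + Complex.I * (x 1 : ℂ)) * pdE 2 f x
    - (x 2 : ℂ) * (pdE 0 f x + Complex.I * pdE 1 f x)

/-- `L₋ = (n₁ − i n₂) ∂/∂n₃ − n₃(∂/∂n₁ − i ∂/∂n₂)`. -/
noncomputable def LmE (f : EuclideanSpace ℝ (Fin 3) → ℂ) (x : EuclideanSpace ℝ (Fin 3)) : ℂ :=
  ((x 0 : ℂ) - Complex.I * (x 1 : ℂ)) * pdE 2 f x
    - (x 2 : ℂ) * (pdE 0 f x - Complex.I * pdE 1 f x)

/-- `L₀ = n₁ ∂/∂n₂ − n₂ ∂/∂n₁`. -/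
noncomputable def L0E (f : EuclideanSpace ℝ (Fin 3) → ℂ) (x : EuclideanSpace ℝ (Fin 3)) : ℂ :=
  (x 0 : ℂ) * pdE 1 f x - (x 1 : ℂ) * pdE 0 f x

/-- `I(f)(ζ) = ∫_{S²} f(n) n(ζ)^ℓ dA(n)`. -/
noncomputable def Ifun (ℓ : ℕ) (f : EuclideanSpace ℝ (Fin 3) → ℂ) (ζ : ℂ) : ℂ :=
  ∫ n : Metric.sphere (0 : EuclideanSpace ℝ (Fin 3)) 1,
    f (n : EuclideanSpace ℝ (Fin 3)) * xzE ζ (n : EuclideanSpace ℝ (Fin 3)) ^ ℓ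
    ∂((volume : Measure (EuclideanSpace ℝ (Fin 3))).toSphere)

open Real Metric Set
open scoped Pointwise

local notation "E3" => EuclideanSpace ℝ (Fin 3)

noncomputable def rotAux (a b : Fin 3) (t : ℝ) (x : E3) : E3 :=
  WithLp.toLp 2 fun k => if k = a then Real.cos t * x a - Real.sin t * x b
           else if k = b then Real.sin t * x a + Real.cos t * x b else x k

lemma rotAux_apply (a b : Fin 3) (t : ℝ) (x : E3) (k : Fin 3) :
    rotAux a b t x k = if k = a then Real.cos t * x a - Real.sin t * x b
           else if k = b then Real.sin t * x a + Real.cos t * x b else x k := rfl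

attribute [irreducible] rotAux

lemma rotAux_zero (a b : Fin 3) (x : E3) : rotAux a b 0 x = x := by
  ext k
  rw [rotAux_apply]
  split_ifs with h1 h2
  · subst h1; simp
  · subst h2; simp
  · rfl

lemma rotAux_rotAux (a b : Fin 3) (hab : a ≠ b) (s t : ℝ) (x : E3) :
    rotAux a b s (rotAux a b t x) = rotAux a b (s + t) x := by
  ext k
  simp only [rotAux_apply]
  have hba : b ≠ a := hab.symm
  split_ifs with h1 h2
  · simp only [if_pos rfl, if_neg hba, if_pos rfl, Real.cos_add, Real.sin_add]; ring
  · simp only [if_pos rfl, if_neg hba, Real.cos_add, Real.sin_add]; ring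
  · rfl

noncomputable def rotE (a b : Fin 3) (hab : a ≠ b) (t : ℝ) : E3 ≃ₗᵢ[ℝ] E3 where
  toFun := rotAux a b t
  invFun := rotAux a b (-t)
  map_add' x y := by
    ext k
    simp only [rotAux_apply, PiLp.add_apply]
    split_ifs <;> ring
  map_smul' c x := by
    ext k
    simp only [rotAux_apply, PiLp.smul_apply, RingHom.id_apply, smul_eq_mul]
    split_ifs <;> ring
  left_inv x := by
    show rotAux a b (-t) (rotAux a b t x) = x
    rw [rotAux_rotAux a b hab, neg_add_cancel, rotAux_zero]
  right_inv x := by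
    show rotAux a b t (rotAux a b (-t) x) = x
    rw [rotAux_rotAux a b hab, add_neg_cancel, rotAux_zero]
  norm_map' x := by
    show ‖rotAux a b t x‖ = ‖x‖
    have hba : b ≠ a := hab.symm
    have hbmem : b ∈ Finset.univ.erase a := Finset.mem_erase.2 ⟨hba, Finset.mem_univ b⟩
    simp only [EuclideanSpace.norm_eq]
    congr 1
    conv_lhs => rw [← Finset.add_sum_erase _ _ (Finset.mem_univ a),
      ← Finset.add_sum_erase _ _ hbmem]
    conv_rhs => rw [← Finset.add_sum_erase _ _ (Finset.mem_univ a),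
      ← Finset.add_sum_erase _ _ hbmem]
    have h1 : ∀ k ∈ (Finset.univ.erase a).erase b, ‖rotAux a b t x k‖ ^ 2 = ‖x k‖ ^ 2 := by
      intro k hk
      rw [Finset.mem_erase, Finset.mem_erase] at hk
      rw [rotAux_apply, if_neg hk.2.1, if_neg hk.1]
    rw [Finset.sum_congr rfl h1, rotAux_apply, rotAux_apply, if_pos rfl, if_neg hba, if_pos rfl]
    have h2 := Real.sin_sq_add_cos_sq t
    simp only [Real.norm_eq_abs, sq_abs]
    nlinarith [h2]

noncomputable def muS : Measure (Metric.sphere (0 : E3) 1) :=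
  (volume : Measure E3).toSphere

instance : IsFiniteMeasure muS := by unfold muS; infer_instance

noncomputable def sphMap (e : E3 ≃ₗᵢ[ℝ] E3) (n : Metric.sphere (0 : E3) 1) :
    Metric.sphere (0 : E3) 1 :=
  ⟨e n, by
    rw [mem_sphere_zero_iff_norm, e.norm_map]
    exact mem_sphere_zero_iff_norm.1 n.2⟩

lemma continuous_sphMap (e : E3 ≃ₗᵢ[ℝ] E3) : Continuous (sphMap e) :=
  Continuous.subtype_mk (e.continuous.comp continuous_subtype_val) _

lemma map_sphMap (e : E3 ≃ₗᵢ[ℝ] E3) : muS.map (sphMap e) = muS := by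
  ext s hs
  rw [Measure.map_apply (continuous_sphMap e).measurable hs]
  unfold muS
  rw [Measure.toSphere_apply' _ ((continuous_sphMap e).measurable hs),
      Measure.toSphere_apply' _ hs]
  congr 1
  have h1 : (Subtype.val '' (sphMap e ⁻¹' s)) = e.symm '' (Subtype.val '' s) := by
    ext y
    constructor
    · rintro ⟨n, hn, rfl⟩
      exact ⟨e n, ⟨sphMap e n, hn, rfl⟩, by simp⟩
    · rintro ⟨z, ⟨m, hm, rfl⟩, rfl⟩
      have hmem : e.symm ↑m ∈ Metric.sphere (0 : E3) 1 := by
        rw [mem_sphere_zero_iff_norm, e.symm.norm_map]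
        exact mem_sphere_zero_iff_norm.1 m.2
      refine ⟨⟨e.symm ↑m, hmem⟩, ?_, rfl⟩
      have : sphMap e ⟨e.symm ↑m, hmem⟩ = m := by
        apply Subtype.ext
        show e (e.symm ↑m) = ↑m
        simp
      show sphMap e _ ∈ s
      rw [this]; exact hm
  rw [h1]
  have h2 : Ioo (0:ℝ) 1 • (⇑e.symm '' (Subtype.val '' s)) = e.symm '' (Ioo (0:ℝ) 1 • (Subtype.val '' s)) := by
    ext y
    simp only [Set.mem_smul, Set.mem_image]
    constructor
    · rintro ⟨c, hc, z, ⟨w, hw, rfl⟩, rfl⟩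
      exact ⟨c • w, ⟨c, hc, w, hw, rfl⟩, by simp [e.symm.map_smul]⟩
    · rintro ⟨z, ⟨c, hc, w, hw, rfl⟩, rfl⟩
      exact ⟨c, hc, e.symm w, ⟨w, hw, rfl⟩, by simp [e.symm.map_smul]⟩
  rw [h2]
  have h3 : ⇑e.symm '' (Ioo (0:ℝ) 1 • (Subtype.val '' s)) = ⇑e ⁻¹' (Ioo (0:ℝ) 1 • (Subtype.val '' s)) := by
    ext y
    constructor
    · rintro ⟨z, hz, rfl⟩; simpa using hz
    · intro hy; exact ⟨e y, hy, by simp⟩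
  rw [h3]
  have me : E3 ≃ᵐ E3 := e.toHomeomorph.toMeasurableEquiv
  have : (volume : Measure E3) (⇑e ⁻¹' (Ioo (0:ℝ) 1 • (Subtype.val '' s)))
      = ((volume : Measure E3).map e.toHomeomorph.toMeasurableEquiv) (Ioo (0:ℝ) 1 • (Subtype.val '' s)) := by
    rw [MeasurableEquiv.map_apply]
    rfl
  rw [this]
  have hcoe : ⇑e.toHomeomorph.toMeasurableEquiv = ⇑e := rfl
  rw [hcoe, e.measurePreserving.map_eq]

lemma integral_sphMap (e : E3 ≃ₗᵢ[ℝ] E3) (h : Metric.sphere (0 : E3) 1 → ℂ)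
    (hc : Continuous h) :
    ∫ n, h (sphMap e n) ∂muS = ∫ n, h n ∂muS := by
  rw [← integral_map (continuous_sphMap e).aemeasurable
    (by rw [map_sphMap]; exact hc.aestronglyMeasurable), map_sphMap]

noncomputable def vA (a b : Fin 3) (x : E3) : E3 :=
  WithLp.toLp 2 fun k => if k = a then -(x b) else if k = b then x a else 0

lemma vA_apply (a b : Fin 3) (x : E3) (k : Fin 3) :
    vA a b x k = if k = a then -(x b) else if k = b then x a else 0 := rfl

attribute [irreducible] vA

lemma continuous_coordE (k : Fin 3) : Continuous (fun x : E3 => x k) :=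
  (EuclideanSpace.proj k).continuous

lemma continuous_rotAux (a b : Fin 3) :
    Continuous (fun p : ℝ × E3 => rotAux a b p.1 p.2) := by
  apply ((PiLp.continuousLinearEquiv 2 ℝ (fun _ : Fin 3 => ℝ)).symm.continuous).comp
  apply continuous_pi
  intro k
  show Continuous fun p : ℝ × E3 => rotAux a b p.1 p.2 k
  simp only [rotAux_apply]
  have h1 : Continuous fun p : ℝ × E3 => p.2 a := (continuous_coordE a).comp continuous_snd
  have h2 : Continuous fun p : ℝ × E3 => p.2 b := (continuous_coordE b).comp continuous_snd
  have hc : Continuous fun p : ℝ × E3 => Real.cos p.1 :=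
    Real.continuous_cos.comp continuous_fst
  have hs : Continuous fun p : ℝ × E3 => Real.sin p.1 :=
    Real.continuous_sin.comp continuous_fst
  split_ifs
  · exact (hc.mul h1).sub (hs.mul h2)
  · exact (hs.mul h1).add (hc.mul h2)
  · exact (continuous_coordE k).comp continuous_snd

lemma rotAux_a (a b : Fin 3) (t : ℝ) (x : E3) :
    rotAux a b t x a = Real.cos t * x a - Real.sin t * x b := by
  rw [rotAux_apply, if_pos rfl]

lemma rotAux_b (a b : Fin 3) (hab : a ≠ b) (t : ℝ) (x : E3) :
    rotAux a b t x b = Real.sin t * x a + Real.cos t * x b := by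
  rw [rotAux_apply, if_neg hab.symm, if_pos rfl]

lemma rotAux_other (a b : Fin 3) (t : ℝ) (x : E3) (k : Fin 3) (h1 : k ≠ a) (h2 : k ≠ b) :
    rotAux a b t x k = x k := by
  rw [rotAux_apply, if_neg h1, if_neg h2]

lemma vA_a (a b : Fin 3) (y : E3) : vA a b y a = -(y b) := by
  rw [vA_apply, if_pos rfl]

lemma vA_b (a b : Fin 3) (hab : a ≠ b) (y : E3) : vA a b y b = y a := by
  rw [vA_apply, if_neg hab.symm, if_pos rfl]

lemma vA_other (a b : Fin 3) (y : E3) (k : Fin 3) (h1 : k ≠ a) (h2 : k ≠ b) :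
    vA a b y k = 0 := by
  rw [vA_apply, if_neg h1, if_neg h2]

lemma vA_eq_smul (a b : Fin 3) (hab : a ≠ b) (x : E3) :
    vA a b x = (-(x b)) • EuclideanSpace.single a (1:ℝ) + (x a) • EuclideanSpace.single b 1 := by
  ext k
  rw [vA_apply, PiLp.add_apply, PiLp.smul_apply, PiLp.smul_apply, smul_eq_mul, smul_eq_mul,
    EuclideanSpace.single_apply, EuclideanSpace.single_apply]
  split_ifs with h1 h2
  · exact absurd (h1 ▸ h2) hab
  · ring
  · ring
  · ring

lemma continuous_vA (a b : Fin 3) : Continuous (vA a b) := by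
  apply ((PiLp.continuousLinearEquiv 2 ℝ (fun _ : Fin 3 => ℝ)).symm.continuous).comp
  apply continuous_pi
  intro k
  show Continuous fun x : E3 => vA a b x k
  simp only [vA_apply]
  split_ifs
  · exact (continuous_coordE b).neg
  · exact continuous_coordE a
  · exact continuous_const

lemma hasDerivAt_rotAux (a b : Fin 3) (hab : a ≠ b) (x : E3) (t : ℝ) :
    HasDerivAt (fun s => rotAux a b s x) (vA a b (rotAux a b t x)) t := by
  have key : HasDerivAt (fun s => (fun k => rotAux a b s x k : Fin 3 → ℝ))
      (fun k => vA a b (rotAux a b t x) k) t := by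
    rw [hasDerivAt_pi]
    intro k
    rcases eq_or_ne k a with h1 | h1
    · subst h1
      simp only [rotAux_a, vA_a, rotAux_b k b hab]
      have : HasDerivAt (fun s => Real.cos s * x k - Real.sin s * x b)
          ((-Real.sin t) * x k - Real.cos t * x b) t :=
        ((Real.hasDerivAt_cos t).mul_const (x k)).sub ((Real.hasDerivAt_sin t).mul_const (x b))
      exact this.congr_deriv (by ring)
    · rcases eq_or_ne k b with h2 | h2
      · subst h2
        simp only [rotAux_b a k hab, vA_b a k hab, rotAux_a]
        have : HasDerivAt (fun s => Real.sin s * x a + Real.cos s * x k)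
            (Real.cos t * x a + (-Real.sin t) * x k) t :=
          ((Real.hasDerivAt_sin t).mul_const (x a)).add ((Real.hasDerivAt_cos t).mul_const (x k))
        exact this.congr_deriv (by ring)
      · have ho : ∀ s, rotAux a b s x k = x k := fun s => rotAux_other a b s x k h1 h2
        simp only [ho, vA_other a b _ k h1 h2]
        exact hasDerivAt_const t (x k)
  have := ((PiLp.continuousLinearEquiv 2 ℝ (fun _ : Fin 3 => ℝ)).symm :
      (Fin 3 → ℝ) →L[ℝ] E3).hasFDerivAt.comp_hasDerivAt t key
  exact this

lemma rotE_coe (a b : Fin 3) (hab : a ≠ b) (t : ℝ) : ⇑(rotE a b hab t) = rotAux a b t := rfl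

lemma vanishK (a b : Fin 3) (hab : a ≠ b) (g : E3 → ℂ) (hg : ContDiff ℝ (⊤ : ℕ∞) g) :
    ∫ n : Metric.sphere (0:E3) 1,
      (((n : E3) a : ℂ) * pdE b g n - ((n : E3) b : ℂ) * pdE a g n) ∂muS = 0 := by
  have hgd : Differentiable ℝ g := hg.differentiable (by simp)
  have hfc : Continuous (fderiv ℝ g) := hg.continuous_fderiv (by simp)
  set F : ℝ → Metric.sphere (0:E3) 1 → ℂ := fun t n => g (rotAux a b t ↑n) with hF
  set F' : ℝ → Metric.sphere (0:E3) 1 → ℂ :=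
    fun t n => fderiv ℝ g (rotAux a b t ↑n) (vA a b (rotAux a b t ↑n)) with hF'
  have rcont := continuous_rotAux a b
  have φcont : Continuous (fun p : ℝ × E3 =>
      fderiv ℝ g (rotAux a b p.1 p.2) (vA a b (rotAux a b p.1 p.2))) :=
    (hfc.comp rcont).clm_apply ((continuous_vA a b).comp rcont)
  have hpair : ∀ t : ℝ, Continuous (fun n : Metric.sphere (0:E3) 1 => ((t, (n:E3)) : ℝ × E3)) :=
    fun t => continuous_const.prodMk continuous_subtype_val
  have cont_t : ∀ t, Continuous (F t) :=
    fun t => hg.continuous.comp (rcont.comp (hpair t))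
  have cont_t' : ∀ t, Continuous (F' t) := fun t => φcont.comp (hpair t)
  obtain ⟨C, hC⟩ := (((isCompact_closedBall (0:ℝ) 1)).prod
    (isCompact_sphere (0:E3) 1)).exists_bound_of_continuousOn φcont.continuousOn
  have key := hasDerivAt_integral_of_dominated_loc_of_deriv_le (μ := muS)
    (F := F) (F' := F') (x₀ := (0:ℝ)) (bound := fun _ => C) (Metric.ball_mem_nhds _ one_pos)
    (Filter.Eventually.of_forall fun t => (cont_t t).aestronglyMeasurable)
    ((cont_t 0).integrable_of_hasCompactSupport (isClosed_tsupport _).isCompact)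
    ((cont_t' 0).aestronglyMeasurable)
    (Filter.Eventually.of_forall fun n => fun t ht =>
      hC (t, (n:E3)) ⟨Metric.ball_subset_closedBall ht, n.2⟩)
    (integrable_const C)
    (Filter.Eventually.of_forall fun n => fun t _ =>
      (hgd (rotAux a b t ↑n)).hasFDerivAt.comp_hasDerivAt t (hasDerivAt_rotAux a b hab ↑n t))
  have hconst : (fun t => ∫ n, F t n ∂muS) = (fun _ => ∫ n, g ↑n ∂muS) := by
    funext t
    have : (fun n : Metric.sphere (0:E3) 1 => F t n)
        = fun n => (g ∘ Subtype.val) (sphMap (rotE a b hab t) n) := rfl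
    rw [this, integral_sphMap (rotE a b hab t) (g ∘ Subtype.val)
      (hg.continuous.comp continuous_subtype_val)]
    rfl
  have hD := key.2
  rw [hconst] at hD
  have hzero : ∫ n, F' 0 n ∂muS = 0 := hD.unique (hasDerivAt_const 0 _)
  have hpt : ∀ x : E3, fderiv ℝ g x (vA a b x)
      = (x a : ℂ) * pdE b g x - (x b : ℂ) * pdE a g x := by
    intro x
    rw [vA_eq_smul a b hab, ContinuousLinearMap.map_add, ContinuousLinearMap.map_smul, ContinuousLinearMap.map_smul]
    unfold pdE
    rw [Complex.real_smul, Complex.real_smul]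
    push_cast
    ring
  rw [← hzero]
  apply integral_congr_ae
  apply Filter.Eventually.of_forall
  intro n
  rw [hF']
  simp only [rotAux_zero]
  rw [hpt]

/-! ### The linear functional `x ↦ xzE ζ x` -/

noncomputable def xzCLM (ζ : ℂ) : E3 →L[ℝ] ℂ :=
  ((1/2 : ℂ) - (1/2:ℂ) * ζ^2) • ((Complex.ofRealCLM).comp (EuclideanSpace.proj 0)) +
  (Complex.I * ((1/2:ℂ) + (1/2:ℂ) * ζ^2)) • ((Complex.ofRealCLM).comp (EuclideanSpace.proj 1)) +
  ζ • ((Complex.ofRealCLM).comp (EuclideanSpace.proj 2))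

lemma xzCLM_apply (ζ : ℂ) (x : E3) : xzCLM ζ x = xzE ζ x := by
  simp only [xzCLM, xzE, ContinuousLinearMap.add_apply, ContinuousLinearMap.smul_apply,
    ContinuousLinearMap.comp_apply, Complex.ofRealCLM_apply, PiLp.proj_apply,
    smul_eq_mul]
  ring

lemma hasFDerivAt_xz (ζ : ℂ) (x : E3) : HasFDerivAt (fun y => xzE ζ y) (xzCLM ζ) x := by
  have h := (xzCLM ζ).hasFDerivAt (x := x)
  have he : ⇑(xzCLM ζ) = fun y => xzE ζ y := funext (xzCLM_apply ζ)
  rwa [he] at h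

lemma contDiff_xz (ζ : ℂ) : ContDiff ℝ (⊤ : ℕ∞) (fun y : E3 => xzE ζ y) := by
  have he : ⇑(xzCLM ζ) = fun y => xzE ζ y := funext (xzCLM_apply ζ)
  rw [← he]
  exact (xzCLM ζ).contDiff

lemma continuous_xz : Continuous (fun p : ℂ × E3 => xzE p.1 p.2) := by
  have hx0 : Continuous fun p : ℂ × E3 => ((p.2 0 : ℝ) : ℂ) :=
    Complex.continuous_ofReal.comp ((continuous_coordE 0).comp continuous_snd)
  have hx1 : Continuous fun p : ℂ × E3 => ((p.2 1 : ℝ) : ℂ) :=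
    Complex.continuous_ofReal.comp ((continuous_coordE 1).comp continuous_snd)
  have hx2 : Continuous fun p : ℂ × E3 => ((p.2 2 : ℝ) : ℂ) :=
    Complex.continuous_ofReal.comp ((continuous_coordE 2).comp continuous_snd)
  unfold xzE
  exact ((continuous_const.mul (hx0.add (continuous_const.mul hx1))).add
    (continuous_fst.mul hx2)).sub
    ((continuous_const.mul (hx0.sub (continuous_const.mul hx1))).mul (continuous_fst.pow 2))

noncomputable def dxzE (ζ : ℂ) (x : E3) : ℂ :=
  (x 2 : ℂ) - ((x 0 : ℂ) - Complex.I * (x 1 : ℂ)) * ζ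

lemma continuous_dxz : Continuous (fun p : ℂ × E3 => dxzE p.1 p.2) := by
  have hx0 : Continuous fun p : ℂ × E3 => ((p.2 0 : ℝ) : ℂ) :=
    Complex.continuous_ofReal.comp ((continuous_coordE 0).comp continuous_snd)
  have hx1 : Continuous fun p : ℂ × E3 => ((p.2 1 : ℝ) : ℂ) :=
    Complex.continuous_ofReal.comp ((continuous_coordE 1).comp continuous_snd)
  have hx2 : Continuous fun p : ℂ × E3 => ((p.2 2 : ℝ) : ℂ) :=
    Complex.continuous_ofReal.comp ((continuous_coordE 2).comp continuous_snd)
  unfold dxzE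
  exact hx2.sub ((hx0.sub (continuous_const.mul hx1)).mul continuous_fst)

lemma hasDerivAt_xz (x : E3) (ζ : ℂ) :
    HasDerivAt (fun z => xzE z x) (dxzE ζ x) ζ := by
  unfold xzE dxzE
  have h : HasDerivAt (fun z : ℂ =>
      (1 / 2 : ℂ) * ((x 0 : ℂ) + Complex.I * (x 1 : ℂ)) + z * (x 2 : ℂ)
        - (1 / 2 : ℂ) * ((x 0 : ℂ) - Complex.I * (x 1 : ℂ)) * z ^ 2)
      (0 + 1 * (x 2 : ℂ) - (1 / 2 : ℂ) * ((x 0 : ℂ) - Complex.I * (x 1 : ℂ)) * (2 * ζ ^ 1)) ζ := by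
    exact ((hasDerivAt_const ζ _).add ((hasDerivAt_id ζ).mul_const _)).sub
      ((hasDerivAt_pow 2 ζ).const_mul _)
  convert h using 1
  push_cast
  ring

/-! ### values of `xzE ζ` on basis vectors -/

lemma single_val (j k : Fin 3) : (EuclideanSpace.single j (1:ℝ)) k = if k = j then 1 else 0 :=
  EuclideanSpace.single_apply j 1 k

lemma xz_c0 (ζ : ℂ) : xzE ζ (EuclideanSpace.single 0 (1:ℝ)) = 1/2 - ζ^2 * (1/2) := by
  unfold xzE
  rw [single_val, single_val, single_val, if_pos rfl, if_neg (by decide), if_neg (by decide)]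
  push_cast
  ring

lemma xz_c1 (ζ : ℂ) : xzE ζ (EuclideanSpace.single 1 (1:ℝ))
    = Complex.I * (1/2) + Complex.I * ζ^2 * (1/2) := by
  unfold xzE
  rw [single_val, single_val, single_val, if_neg (by decide), if_pos rfl, if_neg (by decide)]
  push_cast
  ring

lemma xz_c2 (ζ : ℂ) : xzE ζ (EuclideanSpace.single 2 (1:ℝ)) = ζ := by
  unfold xzE
  rw [single_val, single_val, single_val, if_neg (by decide), if_neg (by decide), if_pos rfl]
  norm_num

/-! ### Leibniz rule -/

lemma pd_xz (j : Fin 3) (ζ : ℂ) (x : E3) :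
    pdE j (fun y => xzE ζ y) x = xzE ζ (EuclideanSpace.single j 1) := by
  unfold pdE
  rw [(hasFDerivAt_xz ζ x).fderiv, xzCLM_apply]

lemma pd_mul_pow {f : E3 → ℂ} (hf : ContDiff ℝ (⊤ : ℕ∞) f) (j : Fin 3) (ζ : ℂ) (ℓ : ℕ) (x : E3) :
    pdE j (fun y => f y * xzE ζ y ^ ℓ) x
      = pdE j f x * xzE ζ x ^ ℓ
        + f x * ((ℓ : ℂ) * xzE ζ x ^ (ℓ-1) * xzE ζ (EuclideanSpace.single j 1)) := by
  have h1 : HasFDerivAt f (fderiv ℝ f x) x := (hf.differentiable (by simp) x).hasFDerivAt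
  have hp : HasDerivAt (fun z : ℂ => z ^ ℓ) ((ℓ:ℂ) * xzE ζ x ^ (ℓ-1)) (xzE ζ x) :=
    hasDerivAt_pow ℓ _
  have h2 : HasFDerivAt (fun y => xzE ζ y ^ ℓ)
      (((ℓ:ℂ) * xzE ζ x ^ (ℓ-1)) • xzCLM ζ) x :=
    hp.comp_hasFDerivAt x (hasFDerivAt_xz ζ x)
  have h3 : HasFDerivAt (fun y => f y * xzE ζ y ^ ℓ) _ x := h1.mul h2
  unfold pdE
  rw [h3.fderiv]
  simp only [ContinuousLinearMap.add_apply, ContinuousLinearMap.smul_apply, xzCLM_apply,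
    smul_eq_mul]
  ring

lemma contDiff_mul_pow {f : E3 → ℂ} (hf : ContDiff ℝ (⊤ : ℕ∞) f) (ζ : ℂ) (ℓ : ℕ) :
    ContDiff ℝ (⊤ : ℕ∞) (fun y => f y * xzE ζ y ^ ℓ) :=
  hf.mul ((contDiff_xz ζ).pow ℓ)

/-! ### Integrability helpers -/

lemma integrable_cont (h : Metric.sphere (0:E3) 1 → ℂ) (hc : Continuous h) :
    Integrable h muS :=
  hc.integrable_of_hasCompactSupport (isClosed_tsupport _).isCompact

lemma continuous_pdE {g : E3 → ℂ} (hg : ContDiff ℝ (⊤ : ℕ∞) g) (j : Fin 3) :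
    Continuous (fun x => pdE j g x) :=
  (hg.continuous_fderiv (by simp)).clm_apply continuous_const

lemma continuous_coordC (j : Fin 3) :
    Continuous (fun n : Metric.sphere (0:E3) 1 => (((n : E3) j : ℝ) : ℂ)) :=
  Complex.continuous_ofReal.comp ((continuous_coordE j).comp continuous_subtype_val)

lemma continuous_coordC' (j : Fin 3) : Continuous (fun x : E3 => ((x j : ℝ) : ℂ)) :=
  Complex.continuous_ofReal.comp (continuous_coordE j)

lemma continuous_pdE_sph {g : E3 → ℂ} (hg : ContDiff ℝ (⊤ : ℕ∞) g) (j : Fin 3) :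
    Continuous (fun n : Metric.sphere (0:E3) 1 => pdE j g (n : E3)) :=
  (continuous_pdE hg j).comp continuous_subtype_val

lemma integrable_K (a b : Fin 3) {g : E3 → ℂ} (hg : ContDiff ℝ (⊤ : ℕ∞) g) :
    Integrable (fun n : Metric.sphere (0:E3) 1 =>
      (((n : E3) a : ℝ) : ℂ) * pdE b g (n : E3) - (((n : E3) b : ℝ) : ℂ) * pdE a g (n : E3))
      muS :=
  integrable_cont _ (((continuous_coordC a).mul (continuous_pdE_sph hg b)).sub
    ((continuous_coordC b).mul (continuous_pdE_sph hg a)))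

/-! ### Integrals of L applied to smooth functions vanish -/

lemma int_Lm {g : E3 → ℂ} (hg : ContDiff ℝ (⊤ : ℕ∞) g) :
    ∫ n : Metric.sphere (0:E3) 1, LmE g (n : E3) ∂muS = 0 := by
  have h02 := vanishK 0 2 (by decide) g hg
  have h12 := vanishK 1 2 (by decide) g hg
  have hpt : ∀ x : E3, LmE g x
      = ((x 0 : ℂ) * pdE 2 g x - (x 2 : ℂ) * pdE 0 g x)
        - Complex.I * ((x 1 : ℂ) * pdE 2 g x - (x 2 : ℂ) * pdE 1 g x) := by
    intro x; unfold LmE; ring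
  calc ∫ n : Metric.sphere (0:E3) 1, LmE g (n : E3) ∂muS
      = ∫ n : Metric.sphere (0:E3) 1,
          ((((n:E3) 0 : ℂ) * pdE 2 g (n:E3) - ((n:E3) 2 : ℂ) * pdE 0 g (n:E3))
            - Complex.I * (((n:E3) 1 : ℂ) * pdE 2 g (n:E3) - ((n:E3) 2 : ℂ) * pdE 1 g (n:E3)))
          ∂muS := by
        exact integral_congr_ae (Filter.Eventually.of_forall fun n => hpt _)
    _ = (∫ n : Metric.sphere (0:E3) 1,
          (((n:E3) 0 : ℂ) * pdE 2 g (n:E3) - ((n:E3) 2 : ℂ) * pdE 0 g (n:E3)) ∂muS)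
        - ∫ n : Metric.sphere (0:E3) 1,
          Complex.I * (((n:E3) 1 : ℂ) * pdE 2 g (n:E3) - ((n:E3) 2 : ℂ) * pdE 1 g (n:E3)) ∂muS :=
        integral_sub (integrable_K 0 2 hg) ((integrable_K 1 2 hg).const_mul _)
    _ = 0 := by rw [integral_const_mul, h02, h12]; simp

lemma int_Lp {g : E3 → ℂ} (hg : ContDiff ℝ (⊤ : ℕ∞) g) :
    ∫ n : Metric.sphere (0:E3) 1, LpE g (n : E3) ∂muS = 0 := by
  have h02 := vanishK 0 2 (by decide) g hg
  have h12 := vanishK 1 2 (by decide) g hg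
  have hpt : ∀ x : E3, LpE g x
      = ((x 0 : ℂ) * pdE 2 g x - (x 2 : ℂ) * pdE 0 g x)
        + Complex.I * ((x 1 : ℂ) * pdE 2 g x - (x 2 : ℂ) * pdE 1 g x) := by
    intro x; unfold LpE; ring
  calc ∫ n : Metric.sphere (0:E3) 1, LpE g (n : E3) ∂muS
      = ∫ n : Metric.sphere (0:E3) 1,
          ((((n:E3) 0 : ℂ) * pdE 2 g (n:E3) - ((n:E3) 2 : ℂ) * pdE 0 g (n:E3))
            + Complex.I * (((n:E3) 1 : ℂ) * pdE 2 g (n:E3) - ((n:E3) 2 : ℂ) * pdE 1 g (n:E3)))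
          ∂muS := by
        exact integral_congr_ae (Filter.Eventually.of_forall fun n => hpt _)
    _ = (∫ n : Metric.sphere (0:E3) 1,
          (((n:E3) 0 : ℂ) * pdE 2 g (n:E3) - ((n:E3) 2 : ℂ) * pdE 0 g (n:E3)) ∂muS)
        + ∫ n : Metric.sphere (0:E3) 1,
          Complex.I * (((n:E3) 1 : ℂ) * pdE 2 g (n:E3) - ((n:E3) 2 : ℂ) * pdE 1 g (n:E3)) ∂muS :=
        integral_add (integrable_K 0 2 hg) ((integrable_K 1 2 hg).const_mul _)
    _ = 0 := by rw [integral_const_mul, h02, h12]; simp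

lemma int_L0 {g : E3 → ℂ} (hg : ContDiff ℝ (⊤ : ℕ∞) g) :
    ∫ n : Metric.sphere (0:E3) 1, L0E g (n : E3) ∂muS = 0 := by
  have h01 := vanishK 0 1 (by decide) g hg
  rw [← h01]
  exact integral_congr_ae (Filter.Eventually.of_forall fun n => by unfold L0E; ring)

/-! ### Differentiation of `Ifun` under the integral sign -/

lemma hasDerivAt_Ifun {f : E3 → ℂ} (hf : ContDiff ℝ (⊤ : ℕ∞) f) (ℓ : ℕ) (ζ₀ : ℂ) :
    HasDerivAt (Ifun ℓ f)
      (∫ n : Metric.sphere (0:E3) 1,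
        f (n : E3) * ((ℓ : ℂ) * xzE ζ₀ (n : E3) ^ (ℓ-1) * dxzE ζ₀ (n : E3)) ∂muS) ζ₀ := by
  set F : ℂ → Metric.sphere (0:E3) 1 → ℂ :=
    fun ζ n => f (n : E3) * xzE ζ (n : E3) ^ ℓ with hF
  set F' : ℂ → Metric.sphere (0:E3) 1 → ℂ :=
    fun ζ n => f (n : E3) * ((ℓ : ℂ) * xzE ζ (n : E3) ^ (ℓ-1) * dxzE ζ (n : E3)) with hF'
  have hpair : ∀ ζ : ℂ, Continuous (fun n : Metric.sphere (0:E3) 1 => ((ζ, (n:E3)) : ℂ × E3)) :=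
    fun ζ => continuous_const.prodMk continuous_subtype_val
  have hfs : Continuous (fun n : Metric.sphere (0:E3) 1 => f (n : E3)) :=
    hf.continuous.comp continuous_subtype_val
  have ψcont : Continuous (fun p : ℂ × E3 =>
      f p.2 * ((ℓ : ℂ) * xzE p.1 p.2 ^ (ℓ-1) * dxzE p.1 p.2)) :=
    (hf.continuous.comp continuous_snd).mul
      ((continuous_const.mul (continuous_xz.pow (ℓ-1))).mul continuous_dxz)
  have cont_t : ∀ ζ, Continuous (F ζ) := fun ζ =>
    hfs.mul ((continuous_xz.comp (hpair ζ)).pow ℓ)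
  have cont_t' : ∀ ζ, Continuous (F' ζ) := fun ζ => ψcont.comp (hpair ζ)
  obtain ⟨C, hC⟩ := (((isCompact_closedBall ζ₀ 1)).prod
    (isCompact_sphere (0:E3) 1)).exists_bound_of_continuousOn ψcont.continuousOn
  have key := hasDerivAt_integral_of_dominated_loc_of_deriv_le (μ := muS)
    (F := F) (F' := F') (x₀ := ζ₀) (bound := fun _ => C) (Metric.ball_mem_nhds _ one_pos)
    (Filter.Eventually.of_forall fun ζ => (cont_t ζ).aestronglyMeasurable)
    ((cont_t ζ₀).integrable_of_hasCompactSupport (isClosed_tsupport _).isCompact)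
    ((cont_t' ζ₀).aestronglyMeasurable)
    (Filter.Eventually.of_forall fun n => fun ζ hζ =>
      hC (ζ, (n:E3)) ⟨Metric.ball_subset_closedBall hζ, n.2⟩)
    (integrable_const C)
    (Filter.Eventually.of_forall fun n => fun ζ _ =>
      ((hasDerivAt_xz (n : E3) ζ).pow ℓ).const_mul (f (n : E3)))
  exact key.2

/-! ### Pointwise Leibniz identities -/

lemma ptLm {f : E3 → ℂ} (hf : ContDiff ℝ (⊤ : ℕ∞) f) (ζ : ℂ) (ℓ : ℕ) (x : E3) :
    LmE f x * xzE ζ x ^ ℓ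
      = LmE (fun y => f y * xzE ζ y ^ ℓ) x
        + f x * ((ℓ : ℂ) * xzE ζ x ^ (ℓ-1) * dxzE ζ x) := by
  unfold LmE dxzE
  rw [pd_mul_pow hf 0, pd_mul_pow hf 1, pd_mul_pow hf 2, xz_c0, xz_c1, xz_c2]
  ring_nf
  try simp only [Complex.I_sq]
  try ring_nf
  try ring

lemma ptLp {f : E3 → ℂ} (hf : ContDiff ℝ (⊤ : ℕ∞) f) (ζ : ℂ) (ℓ : ℕ) (x : E3) :
    LpE f x * xzE ζ x ^ ℓ
      = LpE (fun y => f y * xzE ζ y ^ ℓ) x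
        + (ζ^2 * (f x * ((ℓ : ℂ) * xzE ζ x ^ (ℓ-1) * dxzE ζ x))
           - (2 * (ℓ:ℂ)) * ζ * (f x * xzE ζ x ^ ℓ)) := by
  unfold LpE dxzE
  rw [pd_mul_pow hf 0, pd_mul_pow hf 1, pd_mul_pow hf 2, xz_c0, xz_c1, xz_c2]
  rcases ℓ with _ | m
  · push_cast
    unfold xzE
    ring_nf
    try simp only [Complex.I_sq]
    try ring_nf
    try ring
  · have hp : xzE ζ x ^ (m+1) = xzE ζ x ^ m * xzE ζ x := pow_succ _ _
    have hm : (m+1) - 1 = m := rfl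
    rw [hm, hp]
    push_cast
    unfold xzE
    ring_nf
    try simp only [Complex.I_sq]
    try ring_nf
    try ring

lemma ptL0 {f : E3 → ℂ} (hf : ContDiff ℝ (⊤ : ℕ∞) f) (ζ : ℂ) (ℓ : ℕ) (x : E3) :
    L0E f x * xzE ζ x ^ ℓ
      = L0E (fun y => f y * xzE ζ y ^ ℓ) x
        + Complex.I * (ζ * (f x * ((ℓ : ℂ) * xzE ζ x ^ (ℓ-1) * dxzE ζ x))
           - (ℓ:ℂ) * (f x * xzE ζ x ^ ℓ)) := by
  unfold L0E dxzE
  rw [pd_mul_pow hf 0, pd_mul_pow hf 1, xz_c0, xz_c1]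
  rcases ℓ with _ | m
  · push_cast
    unfold xzE
    ring_nf
    try simp only [Complex.I_sq]
    try ring_nf
    try ring
  · have hp : xzE ζ x ^ (m+1) = xzE ζ x ^ m * xzE ζ x := pow_succ _ _
    have hm : (m+1) - 1 = m := rfl
    rw [hm, hp]
    push_cast
    unfold xzE
    ring_nf
    try simp only [Complex.I_sq]
    try ring_nf
    try ring

/-! ### Main theorem -/

/-- The maps `f ↦ I(f)` intertwine the differential operators `L₊, L₋, L₀` on functions
with the operators `J₊, J₋, J₀` on polynomials in `ζ`: `J_μ(I(f)) = I(L_μ f)`. -/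
theorem J_of_Ifun_eq_Ifun_of_L
    (ℓ : ℕ) (f : EuclideanSpace ℝ (Fin 3) → ℂ) (hf : ContDiff ℝ (⊤ : ℕ∞) f) (ζ : ℂ) :
    ζ ^ 2 * deriv (Ifun ℓ f) ζ - (2 * ℓ : ℂ) * ζ * Ifun ℓ f ζ = Ifun ℓ (LpE f) ζ ∧
    deriv (Ifun ℓ f) ζ = Ifun ℓ (LmE f) ζ ∧
    Complex.I * (ζ * deriv (Ifun ℓ f) ζ - (ℓ : ℂ) * Ifun ℓ f ζ) = Ifun ℓ (L0E f) ζ := by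
  have hg : ContDiff ℝ (⊤ : ℕ∞) (fun y => f y * xzE ζ y ^ ℓ) := contDiff_mul_pow hf ζ ℓ
  have hD := (hasDerivAt_Ifun hf ℓ ζ).deriv
  set D := ∫ n : Metric.sphere (0:E3) 1,
      f (n : E3) * ((ℓ : ℂ) * xzE ζ (n : E3) ^ (ℓ-1) * dxzE ζ (n : E3)) ∂muS with hDdef
  have hI : Ifun ℓ f ζ = ∫ n : Metric.sphere (0:E3) 1,
      f (n : E3) * xzE ζ (n : E3) ^ ℓ ∂muS := rfl
  -- integrability facts
  have hfs : Continuous (fun n : Metric.sphere (0:E3) 1 => f (n : E3)) :=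
    hf.continuous.comp continuous_subtype_val
  have hxzs : Continuous (fun n : Metric.sphere (0:E3) 1 => xzE ζ (n : E3)) :=
    continuous_xz.comp (continuous_const.prodMk continuous_subtype_val)
  have hdxzs : Continuous (fun n : Metric.sphere (0:E3) 1 => dxzE ζ (n : E3)) :=
    continuous_dxz.comp (continuous_const.prodMk continuous_subtype_val)
  have i3 : Integrable (fun n : Metric.sphere (0:E3) 1 =>
      f (n : E3) * xzE ζ (n : E3) ^ ℓ) muS :=
    integrable_cont _ (hfs.mul (hxzs.pow ℓ))
  have i2 : Integrable (fun n : Metric.sphere (0:E3) 1 =>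
      f (n : E3) * ((ℓ : ℂ) * xzE ζ (n : E3) ^ (ℓ-1) * dxzE ζ (n : E3))) muS :=
    integrable_cont _ (hfs.mul ((continuous_const.mul (hxzs.pow (ℓ-1))).mul hdxzs))
  have contLm : Continuous (fun n : Metric.sphere (0:E3) 1 =>
      LmE (fun y => f y * xzE ζ y ^ ℓ) (n : E3)) := by
    have base : Continuous (fun x : E3 => LmE (fun y => f y * xzE ζ y ^ ℓ) x) := by
      unfold LmE
      exact (((continuous_coordC' 0).sub (continuous_const.mul (continuous_coordC' 1))).mul
        (continuous_pdE hg 2)).sub ((continuous_coordC' 2).mul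
        ((continuous_pdE hg 0).sub (continuous_const.mul (continuous_pdE hg 1))))
    exact base.comp continuous_subtype_val
  have contLp : Continuous (fun n : Metric.sphere (0:E3) 1 =>
      LpE (fun y => f y * xzE ζ y ^ ℓ) (n : E3)) := by
    have base : Continuous (fun x : E3 => LpE (fun y => f y * xzE ζ y ^ ℓ) x) := by
      unfold LpE
      exact (((continuous_coordC' 0).add (continuous_const.mul (continuous_coordC' 1))).mul
        (continuous_pdE hg 2)).sub ((continuous_coordC' 2).mul
        ((continuous_pdE hg 0).add (continuous_const.mul (continuous_pdE hg 1))))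
    exact base.comp continuous_subtype_val
  have contL0 : Continuous (fun n : Metric.sphere (0:E3) 1 =>
      L0E (fun y => f y * xzE ζ y ^ ℓ) (n : E3)) := by
    have base : Continuous (fun x : E3 => L0E (fun y => f y * xzE ζ y ^ ℓ) x) := by
      unfold L0E
      exact ((continuous_coordC' 0).mul (continuous_pdE hg 1)).sub
        ((continuous_coordC' 1).mul (continuous_pdE hg 0))
    exact base.comp continuous_subtype_val
  refine ⟨?_, ?_, ?_⟩
  · -- L₊
    have hrhs : Ifun ℓ (LpE f) ζ
        = (∫ n : Metric.sphere (0:E3) 1, LpE (fun y => f y * xzE ζ y ^ ℓ) (n:E3) ∂muS)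
          + (ζ^2 * D - (2*(ℓ:ℂ))*ζ * Ifun ℓ f ζ) := by
      have hcong := integral_congr_ae (μ := muS)
        (Filter.Eventually.of_forall fun n : Metric.sphere (0:E3) 1 => ptLp hf ζ ℓ (n:E3))
      rw [hI]
      show (∫ n : Metric.sphere (0:E3) 1, LpE f (n:E3) * xzE ζ (n:E3) ^ ℓ ∂muS) = _
      have isub : Integrable (fun n : Metric.sphere (0:E3) 1 =>
          ζ^2 * (f (n:E3) * ((ℓ:ℂ) * xzE ζ (n:E3) ^ (ℓ-1) * dxzE ζ (n:E3)))
            - (2*(ℓ:ℂ))*ζ * (f (n:E3) * xzE ζ (n:E3) ^ ℓ)) muS :=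
        ((i2.const_mul (ζ^2))).sub (i3.const_mul ((2*(ℓ:ℂ))*ζ))
      rw [hcong, integral_add (integrable_cont _ contLp) isub,
        integral_sub (i2.const_mul (ζ^2)) (i3.const_mul ((2*(ℓ:ℂ))*ζ)),
        integral_const_mul, integral_const_mul]
    rw [hrhs, int_Lp hg, hD]
    ring
  · -- L₋
    have hrhs : Ifun ℓ (LmE f) ζ
        = (∫ n : Metric.sphere (0:E3) 1, LmE (fun y => f y * xzE ζ y ^ ℓ) (n:E3) ∂muS) + D := by
      have hcong := integral_congr_ae (μ := muS)
        (Filter.Eventually.of_forall fun n : Metric.sphere (0:E3) 1 => ptLm hf ζ ℓ (n:E3))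
      show (∫ n : Metric.sphere (0:E3) 1, LmE f (n:E3) * xzE ζ (n:E3) ^ ℓ ∂muS) = _
      rw [hcong, integral_add (integrable_cont _ contLm) i2]
    rw [hrhs, int_Lm hg, hD]
    ring
  · -- L₀
    have hrhs : Ifun ℓ (L0E f) ζ
        = (∫ n : Metric.sphere (0:E3) 1, L0E (fun y => f y * xzE ζ y ^ ℓ) (n:E3) ∂muS)
          + Complex.I * (ζ * D - (ℓ:ℂ) * Ifun ℓ f ζ) := by
      have hcong := integral_congr_ae (μ := muS)
        (Filter.Eventually.of_forall fun n : Metric.sphere (0:E3) 1 => ptL0 hf ζ ℓ (n:E3))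
      rw [hI]
      show (∫ n : Metric.sphere (0:E3) 1, L0E f (n:E3) * xzE ζ (n:E3) ^ ℓ ∂muS) = _
      have isub : Integrable (fun n : Metric.sphere (0:E3) 1 =>
          Complex.I * (ζ * (f (n:E3) * ((ℓ:ℂ) * xzE ζ (n:E3) ^ (ℓ-1) * dxzE ζ (n:E3)))
            - (ℓ:ℂ) * (f (n:E3) * xzE ζ (n:E3) ^ ℓ))) muS :=
        ((i2.const_mul ζ).sub (i3.const_mul ((ℓ:ℂ)))).const_mul Complex.I
      rw [hcong, integral_add (integrable_cont _ contL0) isub,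
        integral_const_mul, integral_sub (i2.const_mul ζ) (i3.const_mul ((ℓ:ℂ))),
        integral_const_mul, integral_const_mul]
    rw [hrhs, int_L0 hg, hD]
    ring
end

section
/- Let A₁, A₂, A₃, Φ : ℝ³ → M₂(ℂ) be smooth matrix-valued functions, let s ∈ ℝ, and let ψ : ℝ³ → M₂(ℂ) be smooth (the spinor index is the left matrix index, acted on by left multiplication by Pauli matrices; the gauge index is acted on by right matrix multiplication). Define covariant derivatives D_j ψ = ∂_j ψ + ψ A_j for j = 1,2,3, and the Dirac operators D_s ψ = i Σ_j σ_j (D_j ψ) − i s ψ − ψ Φ and D_s† ψ = i Σ_j σ_j (D_j ψ) + i s ψ + ψ Φ, where σ₁, σ₂, σ₃ are the standard Pauli matrices acting by left multiplication. Assume the Bogomolny equation holds in the form ∂_l Φ − [A_l, Φ] = (1/2) Σ_{j,k} ε_{ljk} (∂_j A_k − ∂_k A_j − [A_j, A_k]) for l = 1,2,3. Then for every smooth ψ, D_s(D_s† ψ) = −Σ_j D_j(D_j ψ) + s² ψ − 2 i s ψ Φ − ψ Φ². -/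
attribute [local instance] Matrix.normedAddCommGroup Matrix.normedSpace

/-- The Pauli matrices `σ₁, σ₂, σ₃`. -/
noncomputable def pauli : Fin 3 → Matrix (Fin 2) (Fin 2) ℂ
  | 0 => !![0, 1; 1, 0]
  | 1 => !![0, -Complex.I; Complex.I, 0]
  | 2 => !![1, 0; 0, -1]

/-- The Levi-Civita symbol `ε_{ijk}` on indices in `Fin 3` (with `ε₀₁₂ = 1`). -/
def eps (i j k : Fin 3) : ℤ :=
  (((j : ℕ) : ℤ) - ((i : ℕ) : ℤ)) * (((k : ℕ) : ℤ) - ((i : ℕ) : ℤ))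
    * (((k : ℕ) : ℤ) - ((j : ℕ) : ℤ)) / 2

/-- Partial derivative `∂f/∂x_j` of a matrix-valued function on `ℝ³`. -/
noncomputable def pdM (j : Fin 3) (f : (Fin 3 → ℝ) → Matrix (Fin 2) (Fin 2) ℂ)
    (x : Fin 3 → ℝ) : Matrix (Fin 2) (Fin 2) ℂ :=
  fderiv ℝ f x (Pi.single j 1)

/-- The covariant derivative `D_j ψ = ∂_j ψ + ψ A_j` (gauge index acted on from the right). -/
noncomputable def covD (A : Fin 3 → (Fin 3 → ℝ) → Matrix (Fin 2) (Fin 2) ℂ) (j : Fin 3)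
    (ψ : (Fin 3 → ℝ) → Matrix (Fin 2) (Fin 2) ℂ) (x : Fin 3 → ℝ) :
    Matrix (Fin 2) (Fin 2) ℂ :=
  pdM j ψ x + ψ x * A j x

/-- The Dirac operator `D_s ψ = i Σ_j σ_j (D_j ψ) − i s ψ − ψ Φ`. -/
noncomputable def dirac (A : Fin 3 → (Fin 3 → ℝ) → Matrix (Fin 2) (Fin 2) ℂ)
    (Φ : (Fin 3 → ℝ) → Matrix (Fin 2) (Fin 2) ℂ) (s : ℝ)
    (ψ : (Fin 3 → ℝ) → Matrix (Fin 2) (Fin 2) ℂ) (x : Fin 3 → ℝ) :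
    Matrix (Fin 2) (Fin 2) ℂ :=
  Complex.I • (∑ j : Fin 3, pauli j * covD A j ψ x)
    - (Complex.I * (s : ℂ)) • ψ x - ψ x * Φ x

/-- The adjoint Dirac operator `D_s† ψ = i Σ_j σ_j (D_j ψ) + i s ψ + ψ Φ`. -/
noncomputable def diracDag (A : Fin 3 → (Fin 3 → ℝ) → Matrix (Fin 2) (Fin 2) ℂ)
    (Φ : (Fin 3 → ℝ) → Matrix (Fin 2) (Fin 2) ℂ) (s : ℝ)
    (ψ : (Fin 3 → ℝ) → Matrix (Fin 2) (Fin 2) ℂ) (x : Fin 3 → ℝ) :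
    Matrix (Fin 2) (Fin 2) ℂ :=
  Complex.I • (∑ j : Fin 3, pauli j * covD A j ψ x)
    + (Complex.I * (s : ℂ)) • ψ x + ψ x * Φ x

abbrev Mx := Matrix (Fin 2) (Fin 2) ℂ
abbrev E3 := Fin 3 → ℝ

noncomputable def mulL : Mx →L[ℝ] Mx →L[ℝ] Mx :=
  LinearMap.toContinuousLinearMap
  { toFun := fun a => LinearMap.toContinuousLinearMap (LinearMap.mulLeft ℝ a)
    map_add' := fun a b => by ext m; simp [add_mul]
    map_smul' := fun c a => by ext m; simp [smul_mul_assoc] }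

lemma mulL_bdd : IsBoundedBilinearMap ℝ (fun p : Mx × Mx => p.1 * p.2) :=
  mulL.isBoundedBilinearMap

section calculus
variable {f g : E3 → Mx} {x : E3} {j k : Fin 3}

lemma DifferentiableAt.mmul (hf : DifferentiableAt ℝ f x) (hg : DifferentiableAt ℝ g x) :
    DifferentiableAt ℝ (fun y => f y * g y) x :=
  by have h := ((mulL_bdd.hasFDerivAt (f x, g x)).comp x (hf.hasFDerivAt.prodMk hg.hasFDerivAt)).differentiableAt; exact h

lemma ContDiff.mmul (hf : ContDiff ℝ (⊤ : ℕ∞) f) (hg : ContDiff ℝ (⊤ : ℕ∞) g) :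
    ContDiff ℝ (⊤ : ℕ∞) (fun y => f y * g y) :=
  mulL_bdd.contDiff.comp (hf.prodMk hg)

lemma pdM_mul (hf : DifferentiableAt ℝ f x) (hg : DifferentiableAt ℝ g x) :
    pdM j (fun y => f y * g y) x = pdM j f x * g x + f x * pdM j g x := by
  have h := (mulL_bdd.hasFDerivAt (f x, g x)).comp x (hf.hasFDerivAt.prodMk hg.hasFDerivAt)
  unfold pdM
  erw [show (fun y => f y * g y) = ((fun p : Mx × Mx => p.1 * p.2) ∘ fun y => (f y, g y)) from rfl,
    h.fderiv]
  have hc : ∀ a b : Mx, mulL_bdd.toContinuousLinearMap a b = a * b := fun _ _ => rfl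
  simp [IsBoundedBilinearMap.deriv, hc, add_comm]
  rfl

lemma pdM_add (hf : DifferentiableAt ℝ f x) (hg : DifferentiableAt ℝ g x) :
    pdM j (fun y => f y + g y) x = pdM j f x + pdM j g x := by
  unfold pdM; erw [fderiv_fun_add hf hg]; rfl

lemma pdM_smul (c : ℂ) (hf : DifferentiableAt ℝ f x) :
    pdM j (fun y => c • f y) x = c • pdM j f x := by
  unfold pdM
  erw [fderiv_fun_const_smul hf c]; rfl

lemma pdM_const (C : Mx) : pdM j (fun _ => C) x = 0 := by
  unfold pdM; erw [fderiv_fun_const]; simp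

lemma pdM_const_mul (C : Mx) (hf : DifferentiableAt ℝ f x) :
    pdM j (fun y => C * f y) x = C * pdM j f x := by
  rw [pdM_mul (differentiableAt_const C) hf, pdM_const]
  simp

lemma ContDiff.pdMc (hf : ContDiff ℝ (⊤ : ℕ∞) f) (j : Fin 3) : ContDiff ℝ (⊤ : ℕ∞) (fun y => pdM j f y) := by
  have h1 := hf.fderiv_right (m := (⊤ : ℕ∞)) (by simp)
  exact (ContinuousLinearMap.apply ℝ Mx (Pi.single j (1:ℝ))).contDiff.comp h1

lemma pdM_comm (hf : ContDiff ℝ (⊤ : ℕ∞) f) :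
    pdM j (fun y => pdM k f y) x = pdM k (fun y => pdM j f y) x := by
  have hd : DifferentiableAt ℝ (fderiv ℝ f) x :=
    ((hf.fderiv_right (m := (⊤ : ℕ∞)) (by simp)).differentiable (by simp)) x
  have key : ∀ (a b : Fin 3), pdM a (fun y => pdM b f y) x
      = fderiv ℝ (fderiv ℝ f) x (Pi.single a 1) (Pi.single b 1) := by
    intro a b
    unfold pdM
    erw [fderiv_clm_apply (c := fun y => fderiv ℝ f y) hd (differentiableAt_const _)]
    simp
    rfl
  rw [key, key]
  exact (hf.contDiffAt.isSymmSndFDerivAt (by rw [minSmoothness_of_isRCLikeNormedField]; exact (show (((2 : ℕ∞) : WithTop ℕ∞) ≤ ((⊤ : ℕ∞) : WithTop ℕ∞)) from WithTop.coe_le_coe.mpr le_top))) _ _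
end calculus

section expand
variable {A : Fin 3 → E3 → Mx} {Φ ψ : E3 → Mx} {s : ℝ} {x : E3} {j : Fin 3}

lemma pdM_sum {F : Fin 3 → E3 → Mx} {x : E3} {j : Fin 3}
    (h : ∀ k, DifferentiableAt ℝ (F k) x) :
    pdM j (fun y => ∑ k : Fin 3, F k y) x = ∑ k : Fin 3, pdM j (F k) x := by
  unfold pdM; erw [fderiv_fun_sum fun k _ => h k]; rw [Fin.sum_univ_three, Fin.sum_univ_three]; rfl

lemma pdM_diracDag (hA : ∀ j, ContDiff ℝ (⊤ : ℕ∞) (A j)) (hΦ : ContDiff ℝ (⊤ : ℕ∞) Φ)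
    (hψ : ContDiff ℝ (⊤ : ℕ∞) ψ) :
    pdM j (fun y => diracDag A Φ s ψ y) x =
      Complex.I • (∑ k : Fin 3, pauli k *
          (pdM j (fun y => pdM k ψ y) x + (pdM j ψ x * A k x + ψ x * pdM j (A k) x)))
        + (Complex.I * (s : ℂ)) • pdM j ψ x
        + (pdM j ψ x * Φ x + ψ x * pdM j Φ x) := by
  have dψ := hψ.differentiable (by simp)
  have dA : ∀ k, Differentiable ℝ (A k) := fun k => (hA k).differentiable (by simp)
  have dΦ := hΦ.differentiable (by simp)
  have dP : ∀ k, Differentiable ℝ (fun y => pdM k ψ y) :=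
    fun k => (hψ.pdMc k).differentiable (by simp)
  have dTk : ∀ k : Fin 3, Differentiable ℝ (fun y => pauli k * (pdM k ψ y + ψ y * A k y)) :=
    fun k y => (differentiableAt_const _).mmul ((dP k y).add ((dψ y).mmul (dA k y)))
  have dSum : Differentiable ℝ (fun y => ∑ k : Fin 3, pauli k * (pdM k ψ y + ψ y * A k y)) :=
    fun y => DifferentiableAt.fun_sum (fun k _ => dTk k y)
  have h1 : (fun y => diracDag A Φ s ψ y) = fun y =>
      (Complex.I • (∑ k : Fin 3, pauli k * (pdM k ψ y + ψ y * A k y))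
        + (Complex.I * (s : ℂ)) • ψ y) + ψ y * Φ y := by
    funext y; simp only [diracDag, covD]
  rw [h1, pdM_add (((dSum x).fun_const_smul _).fun_add ((dψ x).fun_const_smul _)) ((dψ x).mmul (dΦ x)),
    pdM_add ((dSum x).fun_const_smul _) ((dψ x).fun_const_smul _),
    pdM_smul _ (dSum x), pdM_smul _ (dψ x), pdM_mul (dψ x) (dΦ x),
    pdM_sum (fun k => dTk k x)]
  have h2 : ∀ k : Fin 3, pdM j (fun y => pauli k * (pdM k ψ y + ψ y * A k y)) x
      = pauli k * (pdM j (fun y => pdM k ψ y) x + (pdM j ψ x * A k x + ψ x * pdM j (A k) x)) :=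
    fun k => by
      rw [pdM_const_mul _ ((dP k x).fun_add ((dψ x).mmul (dA k x))),
        pdM_add (dP k x) ((dψ x).mmul (dA k x)), pdM_mul (dψ x) (dA k x)]
  simp only [h2]

lemma covD_covD (hA : ∀ j, ContDiff ℝ (⊤ : ℕ∞) (A j)) (hψ : ContDiff ℝ (⊤ : ℕ∞) ψ) :
    covD A j (fun y => covD A j ψ y) x =
      pdM j (fun y => pdM j ψ y) x + (pdM j ψ x * A j x + ψ x * pdM j (A j) x)
        + (pdM j ψ x + ψ x * A j x) * A j x := by
  have dψ := hψ.differentiable (by simp)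
  have dA : ∀ k, Differentiable ℝ (A k) := fun k => (hA k).differentiable (by simp)
  have dP : ∀ k, Differentiable ℝ (fun y => pdM k ψ y) :=
    fun k => (hψ.pdMc k).differentiable (by simp)
  have h1 : (fun y => covD A j ψ y) = fun y => pdM j ψ y + ψ y * A j y := by
    funext y; simp only [covD]
  simp only [covD, h1]
  rw [pdM_add (dP j x) ((dψ x).mmul (dA j x)), pdM_mul (dψ x) (dA j x)]
end expand

set_option maxHeartbeats 4000000 in
/-- If the Bogomolny equation `D_lΦ = (1/2)ε_{ljk}F_{jk}` holds, then for every smooth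
spinor `ψ`: `D_s(D_s† ψ) = −Σ_j D_j(D_j ψ) + s² ψ − 2is ψΦ − ψΦ²` (Weitzenböck identity). -/
theorem dirac_comp_diracDag_of_bogomolny
    (A : Fin 3 → (Fin 3 → ℝ) → Matrix (Fin 2) (Fin 2) ℂ)
    (Φ : (Fin 3 → ℝ) → Matrix (Fin 2) (Fin 2) ℂ) (s : ℝ)
    (ψ : (Fin 3 → ℝ) → Matrix (Fin 2) (Fin 2) ℂ)
    (hA : ∀ j, ContDiff ℝ (⊤ : ℕ∞) (A j)) (hΦ : ContDiff ℝ (⊤ : ℕ∞) Φ) (hψ : ContDiff ℝ (⊤ : ℕ∞) ψ)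
    (hbog : ∀ (l : Fin 3) (x : Fin 3 → ℝ),
      pdM l Φ x - (A l x * Φ x - Φ x * A l x) =
        (1 / 2 : ℂ) • ∑ j : Fin 3, ∑ k : Fin 3,
          (eps l j k : ℂ) •
            (pdM j (A k) x - pdM k (A j) x - (A j x * A k x - A k x * A j x))) :
    ∀ x : Fin 3 → ℝ,
      dirac A Φ s (fun y => diracDag A Φ s ψ y) x =
        -(∑ j : Fin 3, covD A j (fun y => covD A j ψ y) x)
          + ((s : ℂ) ^ 2) • ψ x - (2 * Complex.I * (s : ℂ)) • (ψ x * Φ x)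
          - ψ x * (Φ x * Φ x) := by

  intro x
  have hb : ∀ l : Fin 3, pdM l Φ x =
      ((1 / 2 : ℂ) • ∑ j : Fin 3, ∑ k : Fin 3,
          (eps l j k : ℂ) •
            (pdM j (A k) x - pdM k (A j) x - (A j x * A k x - A k x * A j x)))
        + (A l x * Φ x - Φ x * A l x) :=
    fun l => eq_add_of_sub_eq (hbog l x)
  have hc10 : pdM 1 (fun y => pdM 0 ψ y) x = pdM 0 (fun y => pdM 1 ψ y) x := pdM_comm hψ
  have hc20 : pdM 2 (fun y => pdM 0 ψ y) x = pdM 0 (fun y => pdM 2 ψ y) x := pdM_comm hψ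
  have hc21 : pdM 2 (fun y => pdM 1 ψ y) x = pdM 1 (fun y => pdM 2 ψ y) x := pdM_comm hψ
  simp only [dirac, covD_covD hA hψ]
  simp only [show ∀ j : Fin 3, covD A j (fun y => diracDag A Φ s ψ y) x
      = pdM j (fun y => diracDag A Φ s ψ y) x + diracDag A Φ s ψ x * A j x from
    fun j => by simp only [covD]]
  simp only [pdM_diracDag hA hΦ hψ]
  simp only [diracDag, covD]
  simp only [Fin.sum_univ_three, hb]
  norm_num [eps]
  simp only [hc10, hc20, hc21]
  -- generalize to opaque atoms
  generalize pdM 0 (fun y => pdM 0 ψ y) x = Q00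
  generalize pdM 0 (fun y => pdM 1 ψ y) x = Q01
  generalize pdM 0 (fun y => pdM 2 ψ y) x = Q02
  generalize pdM 1 (fun y => pdM 1 ψ y) x = Q11
  generalize pdM 1 (fun y => pdM 2 ψ y) x = Q12
  generalize pdM 2 (fun y => pdM 2 ψ y) x = Q22
  generalize pdM 0 (A 0) x = B00
  generalize pdM 0 (A 1) x = B01
  generalize pdM 0 (A 2) x = B02
  generalize pdM 1 (A 0) x = B10
  generalize pdM 1 (A 1) x = B11
  generalize pdM 1 (A 2) x = B12
  generalize pdM 2 (A 0) x = B20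
  generalize pdM 2 (A 1) x = B21
  generalize pdM 2 (A 2) x = B22
  generalize pdM 0 ψ x = P0
  generalize pdM 1 ψ x = P1
  generalize pdM 2 ψ x = P2
  generalize A 0 x = a0
  generalize A 1 x = a1
  generalize A 2 x = a2
  generalize ψ x = P
  generalize Φ x = F
  generalize (s : ℂ) = c
  clear hb hc10 hc20 hc21 hbog hA hΦ hψ
  have hI2 : Complex.I ^ 2 = -1 := Complex.I_sq
  have hI3 : Complex.I ^ 3 = -Complex.I := by rw [pow_succ, hI2]; ring
  have hI4 : Complex.I ^ 4 = 1 := by rw [pow_succ, hI3]; simp [Complex.I_mul_I]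
  ext a b
  fin_cases a <;> fin_cases b <;>
    · simp only [pauli, Matrix.mul_apply, Matrix.add_apply, Matrix.smul_apply, Matrix.sub_apply,
        Matrix.neg_apply, Fin.sum_univ_two, smul_eq_mul, Matrix.of_apply, Matrix.cons_val',
        Matrix.cons_val_zero, Matrix.cons_val_one, Matrix.head_cons, Matrix.head_fin_const,
        Matrix.empty_val', Matrix.cons_val_fin_one, Fin.isValue, Fin.mk_zero, Fin.mk_one]
      ring_nf
      simp only [hI2, hI3, hI4]
      ring
end
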